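/- Let κ be a cardinal of uncountable cofinality such that no family of subsets of ℕ of cardinality strictly less than κ is a splitting family (e.g., κ = 𝔰, the splitting number). Let (x_α)_{α<κ} be an injective transfinite sequence of real numbers, let X = {x_α : α < κ}, and for α < κ let V_α = {x_ξ : ξ ≤ α}. Equip X with the topology 𝒯 generated by the subspace topology inherited from the usual topology of ℝ together with all the sets V_α, α < κ. Then every sequence (Kₙ)_{n∈ℕ} of subsets of (X,𝒯) has a subsequence that converges in the sense of Kuratowski. -/

import Mathlib

/-!
Only countably many sets of indices matter. A point `x_β` has a neighbourhood base of sets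
`Ioo q r ∩ V_β` with rational `q, r`, and for fixed `q, r` the set of `n` for which `K n` meets
`Ioo q r ∩ V_α` is `{n | m n ≤ α}`, where `m n` is the least index of a point of `K n` in
`Ioo q r`; since the indices are well ordered, such "cuts" of a countable family of ordinals
take only countably many values. As `κ > ℵ₀`, this countable family of subsets of `ℕ` does not
split some infinite `A`, and along `A` every basic neighbourhood meets `K n` either for finitely
many or for almost all `n`, which is Kuratowski convergence.
-/

open Set Topology TopologicalSpace

/-- Lower closed limit (Kuratowski) of the subsequence of `K` indexed by the
infinite set `A ⊆ ℕ`, with respect to the topology `t`: points all of whose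
open neighborhoods meet `K n` for all but finitely many `n ∈ A`. -/
def kurLi {X : Type*} (t : TopologicalSpace X) (K : ℕ → Set X) (A : Set ℕ) : Set X :=
  {x | ∀ U : Set X, IsOpen[t] U → x ∈ U → {n ∈ A | U ∩ K n = ∅}.Finite}

/-- Upper closed limit (Kuratowski): points all of whose open neighborhoods
meet `K n` for infinitely many `n ∈ A`. -/
def kurLs {X : Type*} (t : TopologicalSpace X) (K : ℕ → Set X) (A : Set ℕ) : Set X :=
  {x | ∀ U : Set X, IsOpen[t] U → x ∈ U → {n ∈ A | (U ∩ K n).Nonempty}.Infinite}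

/-- A family of subsets of `ℕ` is splitting if every infinite `A ⊆ ℕ` is split
by some member of the family. -/
def IsSplittingFamily (S : Set (Set ℕ)) : Prop :=
  ∀ A : Set ℕ, A.Infinite → ∃ s ∈ S, (A ∩ s).Infinite ∧ (A \ s).Infinite

/-- The topology on `X = {x_α : α < κ}` generated by the subspace topology
inherited from the usual topology of `ℝ` together with the initial segments
`V_α = {x_ξ : ξ ≤ α}`. -/
def vTop {κ : Cardinal} (x : {o : Ordinal // o < κ.ord} → ℝ) :
    TopologicalSpace ↥(Set.range x) :=
  TopologicalSpace.generateFrom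
    ({V : Set ↥(Set.range x) | ∃ U : Set ℝ, IsOpen U ∧ V = Subtype.val ⁻¹' U} ∪
      {V : Set ↥(Set.range x) | ∃ α : {o : Ordinal // o < κ.ord},
        V = {p : ↥(Set.range x) | ∃ ξ : {o : Ordinal // o < κ.ord},
          (ξ : Ordinal) ≤ (α : Ordinal) ∧ (p : ℝ) = x ξ}})

section WellOrder

variable {ι β : Type*} [Countable ι] [LinearOrder β] [WellFoundedLT β]

theorem countable_range_preimage_Iic (f : ι → β) :
    (range fun b => f ⁻¹' Iic b).Countable := by
  refine ((countable_range fun i => f ⁻¹' Iio (f i)).insert univ).mono ?_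
  rintro _ ⟨b, rfl⟩
  by_cases h : {i | b < f i}.Nonempty
  · -- the cut at `b` is the cut below the least value of `f` above `b`
    refine Or.inr ⟨Function.argminOn f _ h, ?_⟩
    ext i
    exact ⟨fun hi => not_lt.1 fun hbi => Function.not_lt_argminOn f _ hbi hi,
      fun hi => hi.trans_lt (Function.argminOn_mem f _ h)⟩
  · refine Or.inl (eq_univ_of_forall fun i => ?_)
    exact not_lt.1 fun hi => h ⟨i, hi⟩

theorem exists_withTop_forall_exists_mem_le_iff (s : Set β) :
    ∃ m : WithTop β, ∀ b : β, (∃ c ∈ s, c ≤ b) ↔ m ≤ b := by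
  by_cases hs : s.Nonempty
  · refine ⟨(Function.argminOn id s hs : β), fun b => ⟨?_, fun hb => ?_⟩⟩
    · rintro ⟨c, hc, hcb⟩
      exact WithTop.coe_le_coe.2 ((not_lt.1 (Function.not_lt_argminOn id s hc)).trans hcb)
    · exact ⟨_, Function.argminOn_mem id s hs, WithTop.coe_le_coe.1 hb⟩
  · exact ⟨⊤, fun b => by simp [not_nonempty_iff_eq_empty.1 hs]⟩

theorem countable_range_setOf_exists_mem_le (D : ι → Set β) :
    (range fun b => {i | ∃ c ∈ D i, c ≤ b}).Countable := by
  choose m hm using fun i => exists_withTop_forall_exists_mem_le_iff (D i)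
  refine (countable_range_preimage_Iic m).mono ?_
  rintro _ ⟨b, rfl⟩
  exact ⟨b, by ext i; simp [hm]⟩

end WellOrder

section Kuratowski

variable {X : Type*} (t : TopologicalSpace X) (K : ℕ → Set X)

def meetingIndices (B : Set X) : Set ℕ := {n | (B ∩ K n).Nonempty}

theorem kurLi_subset_kurLs {A : Set ℕ} (hA : A.Infinite) : kurLi t K A ⊆ kurLs t K A :=
  fun _ hp U hU hpU => (hA.sdiff (hp U hU hpU)).mono fun _ hn =>
    ⟨hn.1, nonempty_iff_ne_empty.2 fun h => hn.2 ⟨hn.1, h⟩⟩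

theorem kurLs_subset_kurLi {𝓑 : Set (Set X)} (h𝓑open : ∀ B ∈ 𝓑, IsOpen[t] B)
    (h𝓑 : ∀ U, IsOpen[t] U → ∀ p ∈ U, ∃ B ∈ 𝓑, p ∈ B ∧ B ⊆ U) {A : Set ℕ}
    (hA : ∀ B ∈ 𝓑, (A ∩ meetingIndices K B).Infinite → (A \ meetingIndices K B).Finite) :
    kurLs t K A ⊆ kurLi t K A := by
  intro p hp U hU hpU
  obtain ⟨B, hB𝓑, hpB, hBU⟩ := h𝓑 U hU p hpU
  refine (hA B hB𝓑 (hp B (h𝓑open B hB𝓑) hpB)).subset fun n ⟨hnA, hn⟩ => ⟨hnA, ?_⟩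
  rintro ⟨y, hyB, hyK⟩
  exact hn.subset ⟨hBU hyB, hyK⟩

theorem exists_kurLi_eq_kurLs {𝓑 : Set (Set X)} (h𝓑open : ∀ B ∈ 𝓑, IsOpen[t] B)
    (h𝓑 : ∀ U, IsOpen[t] U → ∀ p ∈ U, ∃ B ∈ 𝓑, p ∈ B ∧ B ⊆ U)
    (hns : ¬ IsSplittingFamily (meetingIndices K '' 𝓑)) :
    ∃ A : Set ℕ, A.Infinite ∧ kurLi t K A = kurLs t K A := by
  simp only [IsSplittingFamily, forall_mem_image, not_forall, not_exists, not_and,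
    not_infinite] at hns
  obtain ⟨A, hAinf, hA⟩ := hns
  exact ⟨A, hAinf, (kurLi_subset_kurLs t K hAinf).antisymm (kurLs_subset_kurLi t K h𝓑open h𝓑 hA)⟩

end Kuratowski

section VTop

variable {κ : Cardinal} (x : {o : Ordinal // o < κ.ord} → ℝ)

def vSeg (α : {o : Ordinal // o < κ.ord}) : Set (range x) :=
  {p | ∃ ξ : {o : Ordinal // o < κ.ord}, (ξ : Ordinal) ≤ (α : Ordinal) ∧ (p : ℝ) = x ξ}

def ratBox (q r : ℚ) (α : {o : Ordinal // o < κ.ord}) : Set (range x) :=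
  Subtype.val ⁻¹' Ioo (q : ℝ) r ∩ vSeg x α

def ratBoxes : Set (Set (range x)) :=
  range fun b : ℚ × ℚ × {o : Ordinal // o < κ.ord} => ratBox x b.1 b.2.1 b.2.2

theorem isOpen_of_mem_ratBoxes {B : Set (range x)} (hB : B ∈ ratBoxes x) : IsOpen[vTop x] B := by
  obtain ⟨⟨q, r, α⟩, rfl⟩ := hB
  exact GenerateOpen.inter _ _ (GenerateOpen.basic _ (Or.inl ⟨_, isOpen_Ioo, rfl⟩))
    (GenerateOpen.basic _ (Or.inr ⟨α, rfl⟩))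

theorem exists_nhds_inter_vSeg_subset (hx : Function.Injective x) {U : Set (range x)}
    (hU : IsOpen[vTop x] U) {β : {o : Ordinal // o < κ.ord}} (hβ : rangeFactorization x β ∈ U) :
    ∃ W ∈ 𝓝 (x β), Subtype.val ⁻¹' W ∩ vSeg x β ⊆ U := by
  induction hU generalizing β with
  | basic V hV =>
    rcases hV with ⟨W, hW, rfl⟩ | ⟨α, rfl⟩
    · exact ⟨W, hW.mem_nhds hβ, inter_subset_left⟩
    · obtain ⟨ξ, hξα, hξ⟩ := hβ
      cases hx hξ
      exact ⟨univ, Filter.univ_mem, fun p ⟨_, η, hηβ, hp⟩ => ⟨η, hηβ.trans hξα, hp⟩⟩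
  | univ => exact ⟨univ, Filter.univ_mem, subset_univ _⟩
  | inter U₁ U₂ _ _ ih₁ ih₂ =>
    obtain ⟨W₁, hW₁, h₁⟩ := ih₁ hβ.1
    obtain ⟨W₂, hW₂, h₂⟩ := ih₂ hβ.2
    exact ⟨W₁ ∩ W₂, Filter.inter_mem hW₁ hW₂,
      fun p ⟨⟨hp₁, hp₂⟩, hp⟩ => ⟨h₁ ⟨hp₁, hp⟩, h₂ ⟨hp₂, hp⟩⟩⟩
  | sUnion S _ ih =>
    obtain ⟨V, hVS, hβV⟩ := hβ
    obtain ⟨W, hW, h⟩ := ih V hVS hβV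
    exact ⟨W, hW, fun p hp => ⟨V, hVS, h hp⟩⟩

theorem exists_mem_ratBoxes_subset (hx : Function.Injective x) {U : Set (range x)}
    (hU : IsOpen[vTop x] U) {p : range x} (hp : p ∈ U) :
    ∃ B ∈ ratBoxes x, p ∈ B ∧ B ⊆ U := by
  obtain ⟨β, rfl⟩ := rangeFactorization_surjective p
  obtain ⟨W, hW, hWU⟩ := exists_nhds_inter_vSeg_subset x hx hU hp
  obtain ⟨_, hI, hβI, hIW⟩ := Real.isTopologicalBasis_Ioo_rat.mem_nhds_iff.1 hW
  simp only [mem_iUnion, mem_singleton_iff] at hI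
  obtain ⟨q, r, -, rfl⟩ := hI
  exact ⟨_, ⟨(q, r, β), rfl⟩, ⟨hβI, β, le_rfl, rfl⟩, fun p ⟨hpI, hpβ⟩ => hWU ⟨hIW hpI, hpβ⟩⟩

theorem meetingIndices_ratBox (K : ℕ → Set (range x)) (q r : ℚ)
    (α : {o : Ordinal // o < κ.ord}) :
    meetingIndices K (ratBox x q r α) =
      {n | ∃ ξ ∈ {ξ | x ξ ∈ Ioo (q : ℝ) r ∧ rangeFactorization x ξ ∈ K n}, ξ ≤ α} := by
  ext n
  constructor
  · rintro ⟨p, ⟨hpI, ξ, hξα, hpξ⟩, hpK⟩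
    obtain rfl : p = rangeFactorization x ξ := Subtype.ext hpξ
    exact ⟨ξ, ⟨hpI, hpK⟩, hξα⟩
  · rintro ⟨ξ, ⟨hξI, hξK⟩, hξα⟩
    exact ⟨_, ⟨hξI, ξ, hξα, rfl⟩, hξK⟩

theorem countable_meetingIndices_image_ratBoxes (K : ℕ → Set (range x)) :
    (meetingIndices K '' ratBoxes x).Countable := by
  rw [ratBoxes, ← range_comp]
  refine (countable_iUnion fun q : ℚ => countable_iUnion fun r : ℚ =>
    countable_range_setOf_exists_mem_le fun n =>
      {ξ | x ξ ∈ Ioo (q : ℝ) r ∧ rangeFactorization x ξ ∈ K n}).mono ?_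
  rintro _ ⟨⟨q, r, α⟩, rfl⟩
  exact mem_iUnion₂.2 ⟨q, r, α, (meetingIndices_ratBox x K q r α).symm⟩

end VTop

/-- If `κ` has uncountable cofinality and no family of fewer than `κ` subsets
of `ℕ` is splitting (e.g. `κ = 𝔰`), then the space of Example 8 (a set of `κ`
reals refined by the initial segments `V_α`) has the generalized
Bolzano–Weierstrass property. -/
theorem stmt15 (κ : Cardinal) (hcof : Cardinal.aleph0 < κ.ord.cof)
    (hsmall : ∀ S : Set (Set ℕ), Cardinal.mk S < κ → ¬ IsSplittingFamily S)
    (x : {o : Ordinal // o < κ.ord} → ℝ) (hx : Function.Injective x)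
    (K : ℕ → Set ↥(Set.range x)) :
    ∃ A : Set ℕ, A.Infinite ∧ kurLi (vTop x) K A = kurLs (vTop x) K A := by
  refine exists_kurLi_eq_kurLs (vTop x) K (fun _ => isOpen_of_mem_ratBoxes x)
    (fun _ hU _ => exists_mem_ratBoxes_subset x hx hU) (hsmall _ ?_)
  exact (countable_meetingIndices_image_ratBoxes x K).le_aleph0.trans_lt
    (hcof.trans_le (Ordinal.cof_ord_le κ))
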